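/- arXiv:1306.6714 — 3 statements merged into one kernel-verified Lean document; each statement's English description precedes it below -/
import Mathlib

section
/- For every integer d ≥ 2, the eigenmoment sequence agrees with the moments of the normalized semicircle distribution up to order seven: μ_d(k) = c_k for all 1 ≤ k ≤ 7. In particular μ_d(4) = 1/8 and μ_d(6) = 5/64. -/
/-! For `k = 2, 3` the recursion is a finite sum over `P°_{2k}`. The canonical representative of a
class of length `2k` only uses the labels `0, …, k - 1`, since every symbol occurs at least twice,
so these classes are found by exhaustive enumeration of the words of length `2k` over `k` letters:
two classes of length 4 and eleven of length 6. Reading off their `α`'s and signatures gives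
`∑ = 2d(d-1)μ(2)² = (d² - d)/8` for `k = 2` and
`∑ = 6d(d-1)μ(4)μ(2) + (3d(d-1)² + 2d(d-1)(d-2))μ(2)³ = 5(d³ - d)/64` for `k = 3`. -/

open scoped BigOperators

/-- A closed acyclic path pattern (CAPP): every symbol occurs an even number of
times, and in the substring strictly between any two consecutive occurrences of
the same symbol every symbol occurs an even number of times. -/
def IsCAPP {α : Type*} [DecidableEq α] (l : List α) : Prop :=
  (∀ a ∈ l, Even (l.count a)) ∧
  ∀ i j : Fin l.length, i < j → l.get i = l.get j →
    (∀ m : Fin l.length, i < m → m < j → l.get m ≠ l.get i) →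
    ∀ b, Even (((l.take j).drop (i + 1)).count b)

/-- One step of the stack automaton reading a CAPP: pop if the symbol is on top
of the stack (an even-numbered occurrence), push otherwise. -/
def stackStep {α : Type*} [DecidableEq α] (s : List α) (a : α) : List α :=
  if s.head? = some a then s.tail else a :: s

/-- The stack state after reading the first `i` symbols of `l`; the stack
states are the vertices of the diagram of a CAPP. -/
def prefixStack {α : Type*} [DecidableEq α] (l : List α) (i : ℕ) : List α :=
  (l.take i).foldl stackStep []

/-- The diagram edges of the symbols `a` and `b` share a vertex.  (The diagram
edge of a symbol joins the stack state just before its first occurrence to that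
state with the symbol pushed.) -/
def EdgeAdj {α : Type*} [DecidableEq α] (l : List α) (a b : α) : Prop :=
  prefixStack l (l.idxOf a) = prefixStack l (l.idxOf b) ∨
  prefixStack l (l.idxOf a) = b :: prefixStack l (l.idxOf b) ∨
  a :: prefixStack l (l.idxOf a) = prefixStack l (l.idxOf b) ∨
  a :: prefixStack l (l.idxOf a) = b :: prefixStack l (l.idxOf b)

instance {α : Type*} [DecidableEq α] (l : List α) (a b : α) :
    Decidable (EdgeAdj l a b) := by unfold EdgeAdj; infer_instance

/-- `alphaOf l b` is `α_j`: the number of symbols first occurring strictly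
before `b` whose diagram edge is adjacent to that of `b`. -/
def alphaOf {α : Type*} [DecidableEq α] (l : List α) (b : α) : ℕ :=
  ((l.eraseDups.takeWhile (fun a => decide (a ≠ b))).filter
    (fun a => decide (EdgeAdj l a b))).length

/-- The multiplicity `m_π(d) = ∏_j (d - α_j)` of a CAPP. -/
noncomputable def cappMult {α : Type*} [DecidableEq α] (l : List α) (d : ℝ) : ℝ :=
  (l.eraseDups.map (fun b => d - (alphaOf l b : ℝ))).prod

/-- The moment contribution `μ(n_1) ⋯ μ(n_r)` attached to the signature
`σ(π) = (n_1, …, n_r)` of a CAPP. -/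
noncomputable def cappMomProd {α : Type*} [DecidableEq α] (l : List α)
    (μ : ℕ → ℝ) : ℝ :=
  (l.eraseDups.map (fun b => μ (l.count b))).prod

/-- `P_k`: equivalence classes of CAPPs of length `k`, represented by their
canonical representatives over the symbols `ℕ` (symbols labelled `0, 1, 2, …`
in order of first occurrence). -/
def cappClasses (k : ℕ) : Set (List ℕ) :=
  {l | IsCAPP l ∧ l.length = k ∧ l.map (fun a => l.eraseDups.idxOf a) = l}

/-- `P°_k`: all classes of CAPPs of length `k` except the single class in which
only one symbol occurs. -/
def cappClassesCirc (k : ℕ) : Set (List ℕ) :=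
  {l ∈ cappClasses k | l.eraseDups.length ≠ 1}

/-- `μ` is the eigenmoment sequence for degree `d`: it vanishes at odd indices,
has `μ 2 = 1/4`, and satisfies the recursion
`μ(2k) = (d^k − d)⁻¹ · ∑_{π ∈ P°_{2k}} m_π(d)·μ(n_1)⋯μ(n_r)` for `k ≥ 2`. -/
def IsEigenmomentSeq (d : ℕ) (μ : ℕ → ℝ) : Prop :=
  (∀ k, Odd k → μ k = 0) ∧ μ 2 = 1 / 4 ∧
  ∀ k, 2 ≤ k →
    μ (2 * k) = ((d : ℝ) ^ k - (d : ℝ))⁻¹ *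
      ∑ᶠ π ∈ cappClassesCirc (2 * k), cappMult π (d : ℝ) * cappMomProd π μ

/-- `c_m`: the `m`-th moment of the semicircle distribution normalized to have
second moment `1/4`; `c_{2k} = binom(2k,k)/(4^k (k+1))` and `c_{2k+1} = 0`. -/
noncomputable def semicircleMoment (m : ℕ) : ℝ :=
  if Even m then (Nat.choose m (m / 2) : ℝ) / (4 ^ (m / 2) * (m / 2 + 1)) else 0

namespace List

theorem forall_even_count_iff_forall_mem {α : Type*} [DecidableEq α] (s : List α) :
    (∀ b, Even (s.count b)) ↔ ∀ b ∈ s, Even (s.count b) := by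
  refine ⟨fun h b _ => h b, fun h b => ?_⟩
  by_cases hb : b ∈ s
  · exact h b hb
  · simp [count_eq_zero_of_not_mem hb]

theorem nodup_eraseDups {α : Type*} [BEq α] [LawfulBEq α] (l : List α) : l.eraseDups.Nodup := by
  induction h : l.length using Nat.strong_induction_on generalizing l with
  | _ n ih =>
    cases l with
    | nil => simp
    | cons a as =>
      rw [eraseDups_cons, nodup_cons]
      refine ⟨by simp [mem_eraseDups], ih _ ?_ _ rfl⟩
      have := length_filter_le (fun b => !b == a) as
      simp only [length_cons] at h
      omega

theorem length_eraseDups {α : Type*} [DecidableEq α] (l : List α) :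
    l.eraseDups.length = l.toFinset.card := by
  rw [← toFinset_card_of_nodup (nodup_eraseDups l)]
  congr 1
  ext
  simp [mem_eraseDups]

theorem two_mul_card_toFinset_le {α : Type*} [DecidableEq α] {l : List α}
    (h : ∀ a ∈ l, Even (l.count a)) : 2 * l.toFinset.card ≤ l.length := by
  rw [← sum_toFinset_count_eq_length l, mul_comm, ← smul_eq_mul, ← Finset.sum_const]
  refine Finset.sum_le_sum fun a ha => ?_
  have hal : a ∈ l := mem_toFinset.1 ha
  obtain ⟨m, hm⟩ := h a hal
  have := count_pos_iff.2 hal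
  omega

end List

instance {α : Type*} [DecidableEq α] (l : List α) : Decidable (IsCAPP l) :=
  decidable_of_iff
    ((∀ a ∈ l, Even (l.count a)) ∧
    ∀ i j : Fin l.length, i < j → l.get i = l.get j →
      (∀ m : Fin l.length, i < m → m < j → l.get m ≠ l.get i) →
      ∀ b ∈ (l.take j).drop (i + 1), Even (((l.take j).drop (i + 1)).count b))
    (by simp only [IsCAPP, List.forall_even_count_iff_forall_mem])

instance (k : ℕ) (l : List ℕ) : Decidable (l ∈ cappClasses k) :=
  inferInstanceAs (Decidable (IsCAPP l ∧ l.length = k ∧ l.map (l.eraseDups.idxOf ·) = l))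

instance (k : ℕ) (l : List ℕ) : Decidable (l ∈ cappClassesCirc k) :=
  inferInstanceAs (Decidable (l ∈ cappClasses k ∧ l.eraseDups.length ≠ 1))

def words (b : ℕ) : ℕ → List (List ℕ)
  | 0 => [[]]
  | n + 1 => (List.range b).flatMap fun a => (words b n).map (a :: ·)

theorem mem_words {b n : ℕ} {l : List ℕ} : l ∈ words b n ↔ l.length = n ∧ ∀ a ∈ l, a < b := by
  induction n generalizing l with
  | zero => simp +contextual [words, List.length_eq_zero_iff]
  | succ n ih =>
    cases l with
    | nil => simp [words]
    | cons a l => simp [words, ih, and_comm, and_left_comm]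

theorem nodup_words (b n : ℕ) : (words b n).Nodup := by
  induction n with
  | zero => simp [words]
  | succ n ih =>
    refine List.nodup_flatMap.2 ⟨fun a _ => ih.map (List.cons_injective), ?_⟩
    refine (List.nodup_range).pairwise_of_forall_ne fun a _ a' _ hne => ?_
    simp only [Function.onFun, List.disjoint_left, List.mem_map]
    rintro _ ⟨l, -, rfl⟩ ⟨l', -, h⟩
    exact hne (List.cons_eq_cons.1 h).1.symm

theorem lt_of_mem_cappClasses {k : ℕ} {l : List ℕ} (hl : l ∈ cappClasses k) {a : ℕ}
    (ha : a ∈ l) : a < k / 2 := by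
  obtain ⟨hcapp, hlen, hcanon⟩ := hl
  have hcard := List.two_mul_card_toFinset_le hcapp.1
  rw [← hcanon, List.mem_map] at ha
  obtain ⟨a, ha, rfl⟩ := ha
  have := List.idxOf_lt_length_iff.2 (List.mem_eraseDups.2 ha)
  rw [List.length_eraseDups] at this
  omega

theorem finsum_cappClassesCirc {k : ℕ} {L : List (List ℕ)}
    (hL : (words (k / 2) k).filter (· ∈ cappClassesCirc k) = L) {M : Type*} [AddCommMonoid M]
    (f : List ℕ → M) : ∑ᶠ π ∈ cappClassesCirc k, f π = (L.map f).sum := by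
  have hset : cappClassesCirc k = ↑L.toFinset := by
    ext l
    simp only [← hL, List.coe_toFinset, Set.mem_ofPred_eq, List.mem_filter, mem_words,
      decide_eq_true_eq]
    exact ⟨fun hl => ⟨⟨hl.1.2.1, fun _ => lt_of_mem_cappClasses hl.1⟩, hl⟩, And.right⟩
  rw [hset, finsum_mem_coe_finset, List.sum_toFinset _ (hL ▸ (nodup_words _ _).filter _)]

theorem filter_words_mem_cappClassesCirc_four :
    (words 2 4).filter (· ∈ cappClassesCirc 4) = [[0,0,1,1], [0,1,1,0]] := by
  decide

set_option maxRecDepth 40000 in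
theorem filter_words_mem_cappClassesCirc_six :
    (words 3 6).filter (· ∈ cappClassesCirc 6) = [[0,0,0,0,1,1], [0,0,0,1,1,0], [0,0,1,1,0,0],
      [0,0,1,1,1,1], [0,0,1,1,2,2], [0,0,1,2,2,1], [0,1,1,0,0,0], [0,1,1,0,2,2], [0,1,1,1,1,0],
      [0,1,1,2,2,0], [0,1,2,2,1,0]] := by
  decide

section Profile

variable {α : Type*} [DecidableEq α]

def cappAlphas (l : List α) : List ℕ := l.eraseDups.map (alphaOf l)

def cappSignature (l : List α) : List ℕ := l.eraseDups.map l.count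

theorem cappMult_eq (l : List α) (d : ℝ) :
    cappMult l d = ((cappAlphas l).map fun a : ℕ => d - a).prod := by
  simp only [cappMult, cappAlphas, List.map_map]
  rfl

theorem cappMomProd_eq (l : List α) (μ : ℕ → ℝ) :
    cappMomProd l μ = ((cappSignature l).map μ).prod := by
  simp only [cappMomProd, cappSignature, List.map_map]
  rfl

theorem sum_cappMult_mul_cappMomProd {L : List (List α)} {D : List (List ℕ × List ℕ)}
    (hD : L.map (fun π => (cappAlphas π, cappSignature π)) = D) (d : ℝ) (μ : ℕ → ℝ) :
    (L.map fun π => cappMult π d * cappMomProd π μ).sum =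
      (D.map fun p => (p.1.map fun a : ℕ => d - a).prod * (p.2.map μ).prod).sum := by
  simp only [← hD, cappMult_eq, cappMomProd_eq, List.map_map]
  rfl

end Profile

theorem finsum_cappClassesCirc_four (d : ℝ) (μ : ℕ → ℝ) :
    ∑ᶠ π ∈ cappClassesCirc 4, cappMult π d * cappMomProd π μ = 2 * d * (d - 1) * μ 2 ^ 2 := by
  rw [finsum_cappClassesCirc filter_words_mem_cappClassesCirc_four,
    sum_cappMult_mul_cappMomProd (D := [([0, 1], [2, 2]), ([0, 1], [2, 2])]) (by decide)]
  simp only [List.map_cons, List.map_nil, List.prod_cons, List.prod_nil, List.sum_cons,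
    List.sum_nil, Nat.cast_zero, Nat.cast_one]
  ring

theorem finsum_cappClassesCirc_six (d : ℝ) (μ : ℕ → ℝ) :
    ∑ᶠ π ∈ cappClassesCirc 6, cappMult π d * cappMomProd π μ =
      6 * d * (d - 1) * μ 4 * μ 2 + (3 * d * (d - 1) ^ 2 + 2 * d * (d - 1) * (d - 2)) * μ 2 ^ 3 := by
  rw [finsum_cappClassesCirc filter_words_mem_cappClassesCirc_six,
    -- the pairs `(α, σ)` of the eleven classes, in the order of the enumeration
    sum_cappMult_mul_cappMomProd (D := [([0, 1], [4, 2]), ([0, 1], [4, 2]), ([0, 1], [4, 2]),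
      ([0, 1], [2, 4]), ([0, 1, 2], [2, 2, 2]), ([0, 1, 1], [2, 2, 2]), ([0, 1], [4, 2]),
      ([0, 1, 1], [2, 2, 2]), ([0, 1], [2, 4]), ([0, 1, 2], [2, 2, 2]), ([0, 1, 1], [2, 2, 2])])
      (by decide)]
  simp only [List.map_cons, List.map_nil, List.prod_cons, List.prod_nil, List.sum_cons,
    List.sum_nil, Nat.cast_zero, Nat.cast_one, Nat.cast_ofNat]
  ring

/-- For every `d ≥ 2`, the eigenmoment sequence agrees with the moments of the
normalized semicircle distribution up to order seven; in particular
`μ_d(4) = 1/8` and `μ_d(6) = 5/64`. -/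
theorem stmt3 (d : ℕ) (hd : 2 ≤ d) (μ : ℕ → ℝ) (hμ : IsEigenmomentSeq d μ) :
    (∀ k, 1 ≤ k → k ≤ 7 → μ k = semicircleMoment k) ∧
    μ 4 = 1 / 8 ∧ μ 6 = 5 / 64 := by
  obtain ⟨hodd, h2, hrec⟩ := hμ
  have hd' : (2 : ℝ) ≤ d := by exact_mod_cast hd
  have h4 : μ 4 = 1 / 8 := by
    have hne : (d : ℝ) ^ 2 - d ≠ 0 := by nlinarith
    rw [show 4 = 2 * 2 from rfl, hrec 2 le_rfl, finsum_cappClassesCirc_four, h2,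
      show 2 * (d : ℝ) * (d - 1) * (1 / 4) ^ 2 = (d ^ 2 - d) * (1 / 8) by ring,
      inv_mul_cancel_left₀ hne]
  have h6 : μ 6 = 5 / 64 := by
    have hne : (d : ℝ) ^ 3 - d ≠ 0 := by nlinarith [sq_nonneg ((d : ℝ) - 1)]
    rw [show 6 = 2 * 3 from rfl, hrec 3 (by norm_num), finsum_cappClassesCirc_six, h2, h4,
      show 6 * (d : ℝ) * (d - 1) * (1 / 8) * (1 / 4) +
          (3 * d * (d - 1) ^ 2 + 2 * d * (d - 1) * (d - 2)) * (1 / 4) ^ 3 =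
        (d ^ 3 - d) * (5 / 64) by ring,
      inv_mul_cancel_left₀ hne]
  refine ⟨fun k hk1 hk7 => ?_, h4, h6⟩
  interval_cases k <;> norm_num [semicircleMoment, hodd, h2, h4, h6, Nat.choose, Nat.even_iff]
end

section
/- Let G be a simple graph that is acyclic (contains no cycles), let v be a vertex of G, and let c be a closed walk in G based at v. Then the list of edges traversed by c (with multiplicity, in order) is a closed acyclic path pattern: every edge that is traversed is traversed an even number of times, and between any two consecutive traversals of the same edge, every edge that is traversed is traversed an even number of times. -/
/-!
In an acyclic graph every edge `e = s(a, b)` is a bridge, so a walk uses `e` an odd number of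
times exactly when its endpoints lie on different sides of `e`. A closed walk therefore uses every
edge an even number of times. Between two consecutive traversals of `e` the walk avoids `e`, so it
stays on one side: the second traversal goes back from `b` to `a`, and the stretch in between is a
closed walk at `b`, whose edge counts are again even.
-/

theorem isCAPP_of_even_count_of_even_count_between {α : Type*} [DecidableEq α] {l : List α}
    (hcount : ∀ a, Even (l.count a))
    (hbetween : ∀ i j (hij : i < j) (hj : j < l.length), l[i] = l[j] →
      l[i] ∉ (l.take j).drop (i + 1) → ∀ b, Even (((l.take j).drop (i + 1)).count b)) :
    IsCAPP l := by
  refine ⟨fun a _ ↦ hcount a, fun ⟨i, hi⟩ ⟨j, hj⟩ hij heq hmid ↦ hbetween i j hij hj heq ?_⟩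
  intro hmem
  obtain ⟨k, hk, hlk⟩ := List.getElem_of_mem hmem
  simp only [List.length_drop, List.length_take] at hk
  refine hmid ⟨i + 1 + k, by omega⟩ (Fin.mk_lt_mk.mpr (by omega)) (Fin.mk_lt_mk.mpr (by omega)) ?_
  simpa using hlk

namespace SimpleGraph

variable {V : Type*} {G : SimpleGraph V}

theorem Walk.reachable_deleteEdges_of_reachable_deleteEdges_or {a b u w : V} (p : G.Walk u w)
    (hu : (G.deleteEdges {s(a, b)}).Reachable a u ∨ (G.deleteEdges {s(a, b)}).Reachable b u) :
    (G.deleteEdges {s(a, b)}).Reachable a w ∨ (G.deleteEdges {s(a, b)}).Reachable b w := by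
  induction p with
  | nil => exact hu
  | @cons x z w hxz q ih =>
    apply ih
    by_cases he : s(x, z) = s(a, b)
    · rcases Sym2.eq_iff.mp he with ⟨-, rfl⟩ | ⟨-, rfl⟩
      exacts [Or.inr .rfl, Or.inl .rfl]
    · have hxz' : (G.deleteEdges {s(a, b)}).Adj x z := by simpa [hxz] using he
      exact hu.imp (·.trans hxz'.reachable) (·.trans hxz'.reachable)

theorem IsBridge.reachable_deleteEdges_iff_not {x z y : V} (hbr : G.IsBridge s(x, z))
    (hy : G.Reachable z y) :
    (G.deleteEdges {s(x, z)}).Reachable x y ↔ ¬ (G.deleteEdges {s(x, z)}).Reachable z y := by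
  refine ⟨fun hxy hzy ↦ isBridge_iff.mp hbr (hxy.trans hzy.symm), fun hzy ↦ ?_⟩
  obtain ⟨p⟩ := hy
  exact (p.reachable_deleteEdges_of_reachable_deleteEdges_or (Or.inr .rfl)).resolve_right hzy

theorem Walk.exists_walk_edges_eq_drop_take {u v : V} (p : G.Walk u v) {i j : ℕ} (hij : i ≤ j) :
    ∃ q : G.Walk (p.getVert i) (p.getVert j), q.edges = (p.edges.take j).drop i :=
  ⟨((p.drop i).take (j - i)).copy rfl (by rw [Walk.drop_getVert, Nat.add_sub_cancel' hij]),
    by simp [Walk.edges_take, Walk.edges_drop, List.drop_take]⟩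

variable [DecidableEq V]

theorem IsBridge.even_count_edges_iff {e : Sym2 V} (hbr : G.IsBridge e) {x y : V}
    (p : G.Walk x y) : Even (p.edges.count e) ↔ (G.deleteEdges {e}).Reachable x y := by
  induction p with
  | nil => simp
  | @cons x z y hxz q ih =>
    rw [Walk.edges_cons, List.count_cons]
    simp only [beq_iff_eq]
    by_cases he : s(x, z) = e
    · subst he
      rw [if_pos rfl, Nat.even_add_one, ih,
        hbr.reachable_deleteEdges_iff_not ⟨q⟩]
    · have hxz' : (G.deleteEdges {e}).Adj x z := by simpa [hxz] using he
      rw [if_neg he, Nat.add_zero, ih]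
      exact ⟨hxz'.reachable.trans, hxz'.symm.reachable.trans⟩

theorem IsAcyclic.even_count_edges (hG : G.IsAcyclic) {v : V} (c : G.Walk v v) (e : Sym2 V) :
    Even (c.edges.count e) := by
  by_cases he : e ∈ c.edges
  · exact ((isAcyclic_iff_forall_isBridge.mp hG) (c.edges_subset_edgeSet he)).even_count_edges_iff
      c |>.mpr .rfl
  · simp [List.count_eq_zero_of_not_mem he]

theorem IsAcyclic.even_count_edges_between (hG : G.IsAcyclic) {u v : V} (p : G.Walk u v)
    {i j : ℕ} (hij : i < j) (hj : j < p.edges.length) (heq : p.edges[i] = p.edges[j])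
    (hnot : p.edges[i] ∉ (p.edges.take j).drop (i + 1)) (b : Sym2 V) :
    Even (((p.edges.take j).drop (i + 1)).count b) := by
  obtain ⟨q, hq⟩ := p.exists_walk_edges_eq_drop_take (i := i + 1) hij
  rw [← hq] at hnot ⊢
  rw [Walk.getElem_edges] at hnot
  rw [Walk.getElem_edges, Walk.getElem_edges, Sym2.eq_iff] at heq
  rcases heq with ⟨hstart, -⟩ | ⟨-, hloop⟩
  · -- `q` would join the two sides of the bridge without crossing it
    have hbr : G.IsBridge s(p.getVert i, p.getVert (i + 1)) :=
      isAcyclic_iff_forall_adj_isBridge.mp hG (p.adj_getVert_succ (by simpa using hj.trans' hij))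
    refine absurd ?_ hnot
    simpa [Sym2.eq_swap] using
      isBridge_iff_forall_walk_mem_edges.mp hbr (q.reverse.copy hstart.symm rfl)
  · simpa using hG.even_count_edges (q.copy rfl hloop.symm) b

end SimpleGraph

/-- In an acyclic simple graph, the edge list of any closed walk is a closed
acyclic path pattern. -/
theorem stmt7 {V : Type*} [DecidableEq V] (G : SimpleGraph V)
    (hG : G.IsAcyclic) (v : V) (c : G.Walk v v) :
    IsCAPP c.edges :=
  isCAPP_of_even_count_of_even_count_between (hG.even_count_edges c)
    fun _ _ hij hj heq hnot ↦ hG.even_count_edges_between c hij hj heq hnot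
end

section
/- Every closed acyclic path pattern is realizable as the edge sequence of a closed walk in a tree: for every CAPP π (a finite list over some symbol type), there exist a finite simple graph T that is a tree (connected and acyclic), a vertex v of T, a closed walk c in T based at v, and an injective map φ from the symbols occurring in π to the edges of T, such that the list of edges traversed by c equals the image of π under φ. -/
namespace SimpleGraph

variable {V : Type*} {G : SimpleGraph V}

lemma Walk.apply_eq_of_forall_isDiag_map {β : Type*} (g : V → β) {u v : V} (p : G.Walk u v)
    (hp : ∀ e ∈ p.edges, (e.map g).IsDiag) : g u = g v := by
  induction p with
  | nil => rfl
  | cons h p ih =>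
    simp only [Walk.edges_cons, List.forall_mem_cons, Sym2.map_mk, Sym2.mk_isDiag_iff] at hp
    exact hp.1.trans (ih hp.2)

theorem isAcyclic_of_forall_exists_unique_jump {β : Type*}
    (h : ∀ e ∈ G.edgeSet, ∃ g : V → β, ∀ e' ∈ G.edgeSet, ¬ (e'.map g).IsDiag ↔ e' = e) :
    G.IsAcyclic := by
  rintro u (_ | ⟨huv, p⟩) hc
  · exact Walk.not_isCycle_nil hc
  obtain ⟨g, hg⟩ := h _ (G.mem_edgeSet.mpr huv)
  have hp := ((Walk.cons_isCycle_iff p huv).mp hc).2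
  have hgp := p.apply_eq_of_forall_isDiag_map g fun e he => by
    by_contra hd
    exact hp ((hg e (p.edges_subset_edgeSet he)).mp hd ▸ he)
  exact (hg _ (G.mem_edgeSet.mpr huv)).mpr rfl (Sym2.mk_isDiag_iff.mpr hgp.symm)

section seqGraph

variable {W : Type*} (x : ℕ → W)

def seqEdge (i : ℕ) : Sym2 (Set.range x) :=
  s(Set.rangeFactorization x i, Set.rangeFactorization x (i + 1))

-- `fromEdgeSet` discards the steps with `x i = x (i + 1)`.
def seqGraph : SimpleGraph (Set.range x) :=
  fromEdgeSet (Set.range (seqEdge x))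

variable {x}

lemma seqEdge_eq_seqEdge_iff {i j : ℕ} :
    seqEdge x i = seqEdge x j ↔ s(x i, x (i + 1)) = s(x j, x (j + 1)) :=
  (Sym2.map.injective Subtype.val_injective).eq_iff.symm

lemma mem_edgeSet_seqGraph {e : Sym2 (Set.range x)} :
    e ∈ (seqGraph x).edgeSet ↔ ∃ i, x i ≠ x (i + 1) ∧ seqEdge x i = e := by
  simp only [seqGraph, edgeSet_fromEdgeSet, Set.mem_sdiff, Set.mem_range, Sym2.mem_diagSet]
  constructor
  · rintro ⟨⟨i, rfl⟩, hi⟩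
    exact ⟨i, fun h => hi (Sym2.mk_isDiag_iff.mpr (Subtype.ext h)), rfl⟩
  · rintro ⟨i, hi, rfl⟩
    exact ⟨⟨i, rfl⟩, fun h => hi (congrArg Subtype.val (Sym2.mk_isDiag_iff.mp h))⟩

lemma seqGraph_adj_succ {i : ℕ} (h : x i ≠ x (i + 1)) :
    (seqGraph x).Adj (Set.rangeFactorization x i) (Set.rangeFactorization x (i + 1)) :=
  mem_edgeSet_seqGraph.mpr ⟨i, h, rfl⟩

lemma seqGraph_connected : (seqGraph x).Connected := by
  have reach (i : ℕ) : (seqGraph x).Reachable (Set.rangeFactorization x 0)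
      (Set.rangeFactorization x i) := by
    induction i with
    | zero => rfl
    | succ i ih =>
      refine ih.trans ?_
      by_cases h : x i = x (i + 1)
      · rw [show Set.rangeFactorization x (i + 1) = Set.rangeFactorization x i from
          Subtype.ext h.symm]
      · exact (seqGraph_adj_succ h).reachable
  exact (connected_iff_exists_forall_reachable _).mpr ⟨_, fun w => by
    obtain ⟨i, rfl⟩ := Set.rangeFactorization_surjective w
    exact reach i⟩

lemma exists_walk_seqGraph_edges_eq (n : ℕ) (h : ∀ i < n, x i ≠ x (i + 1)) :
    ∃ c : (seqGraph x).Walk (Set.rangeFactorization x 0) (Set.rangeFactorization x n),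
      c.edges = (List.range n).map (seqEdge x) := by
  induction n with
  | zero => exact ⟨.nil, rfl⟩
  | succ n ih =>
    obtain ⟨c, hc⟩ := ih fun i hi => h i (by omega)
    refine ⟨c.concat (seqGraph_adj_succ (h n (by omega))), ?_⟩
    rw [Walk.edges_concat, hc, List.range_succ, List.map_append, List.concat_eq_append]
    rfl

end seqGraph

end SimpleGraph

namespace List

variable {α : Type*} [DecidableEq α] (l : List α)

def prefixParity (i : ℕ) (b : α) : ZMod 2 :=
  (l.take i).count b

variable {l}

lemma prefixParity_zero : l.prefixParity 0 = 0 := by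
  funext b
  simp [prefixParity]

lemma prefixParity_of_length_le {i : ℕ} (h : l.length ≤ i) :
    l.prefixParity i = l.prefixParity l.length := by
  funext b
  rw [prefixParity, prefixParity, take_of_length_le h, take_of_length_le le_rfl]

lemma prefixParity_succ {i : ℕ} (hi : i < l.length) :
    l.prefixParity (i + 1) = l.prefixParity i + Pi.single l[i] 1 := by
  funext b
  simp only [prefixParity, take_add_one, getElem?_eq_getElem hi, Option.toList_some, count_append,
    count_singleton, Pi.add_apply, Pi.single_apply, beq_iff_eq, eq_comm (a := l[i])]
  split_ifs <;> simp

lemma prefixParity_succ_apply_eq_iff {i : ℕ} (hi : i < l.length) (b : α) :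
    l.prefixParity (i + 1) b = l.prefixParity i b ↔ b ≠ l[i] := by
  rw [prefixParity_succ hi, Pi.add_apply, Pi.single_apply]
  split_ifs with hb <;> simp [hb]

lemma prefixParity_ne_succ {i : ℕ} (hi : i < l.length) :
    l.prefixParity i ≠ l.prefixParity (i + 1) :=
  fun h => (prefixParity_succ_apply_eq_iff hi l[i]).mp (congrFun h _).symm rfl

lemma lt_length_of_prefixParity_ne_succ {i : ℕ} (h : l.prefixParity i ≠ l.prefixParity (i + 1)) :
    i < l.length := by
  by_contra! hi
  exact h ((prefixParity_of_length_le hi).trans (prefixParity_of_length_le (by omega)).symm)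

lemma prefixParity_succ_eq_of_eq_succ {i j : ℕ} (hi : i < l.length) (hj : j < l.length) (h : l[i] = l[j])
    (hij : l.prefixParity j = l.prefixParity (i + 1)) :
    l.prefixParity (j + 1) = l.prefixParity i := by
  rw [prefixParity_succ hj, hij, prefixParity_succ hi, h, add_assoc, ← Pi.single_add,
    show (1 + 1 : ZMod 2) = 0 from rfl, Pi.single_zero, add_zero]

lemma finite_range_prefixParity : (Set.range l.prefixParity).Finite := by
  refine ((Set.finite_Iic l.length).image l.prefixParity).subset ?_
  rintro _ ⟨i, rfl⟩
  rcases le_total i l.length with h | h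
  · exact ⟨i, h, rfl⟩
  · exact ⟨l.length, Set.mem_Iic.mpr le_rfl, (prefixParity_of_length_le h).symm⟩

open SimpleGraph

variable (l) in
def letterEdge (a : α) : Sym2 (Set.range l.prefixParity) :=
  seqEdge l.prefixParity (l.idxOf a)

lemma letterEdge_mem_edgeSet {a : α} (ha : a ∈ l) :
    l.letterEdge a ∈ (seqGraph l.prefixParity).edgeSet :=
  mem_edgeSet_seqGraph.mpr ⟨_, prefixParity_ne_succ (idxOf_lt_length_iff.mpr ha), rfl⟩

lemma getElem_eq_of_seqEdge_eq {i j : ℕ} (hi : i < l.length) (hj : j < l.length)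
    (h : seqEdge l.prefixParity i = seqEdge l.prefixParity j) : l[i] = l[j] := by
  have := congrArg (fun e => (e.map (· l[i])).IsDiag) (seqEdge_eq_seqEdge_iff.mp h)
  simp only [Sym2.map_mk, Sym2.mk_isDiag_iff, eq_comm (b := l.prefixParity (_ + 1) _)] at this
  rw [prefixParity_succ_apply_eq_iff hi, prefixParity_succ_apply_eq_iff hj] at this
  simpa using this

lemma injOn_letterEdge : Set.InjOn l.letterEdge {a | a ∈ l} := by
  intro a ha b hb h
  have ha' := idxOf_lt_length_iff.mpr ha
  have hb' := idxOf_lt_length_iff.mpr hb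
  rw [← getElem_idxOf ha', ← getElem_idxOf hb']
  exact getElem_eq_of_seqEdge_eq ha' hb' h

end List

namespace IsCAPP

open List

variable {α : Type*} [DecidableEq α] {l : List α}

lemma prefixParity_length (hl : IsCAPP l) : l.prefixParity l.length = 0 := by
  funext b
  rw [prefixParity, take_length, Pi.zero_apply, ZMod.natCast_eq_zero_iff_even]
  by_cases hb : b ∈ l
  · exact hl.1 b hb
  · simp [count_eq_zero.mpr hb]

lemma prefixParity_eq_of_consecutive (hl : IsCAPP l) {i j : ℕ} (hij : i < j) (hj : j < l.length)
    (h : l[i] = l[j]) (hm : ∀ m (hmj : m < j), i < m → l[m] ≠ l[i]) :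
    l.prefixParity j = l.prefixParity (i + 1) := by
  funext b
  have heven := hl.2 ⟨i, hij.trans hj⟩ ⟨j, hj⟩ hij h (fun m him hmj => hm m hmj him) b
  have hsplit := congrArg (count b) (take_append_drop (i + 1) (l.take j))
  rw [take_take, min_eq_left hij, count_append] at hsplit
  simp only [prefixParity, ← hsplit, Nat.cast_add, (ZMod.natCast_eq_zero_iff_even).mpr heven,
    add_zero]

open SimpleGraph

lemma seqEdge_eq_of_lt (hl : IsCAPP l) {i j : ℕ} (hij : i < j) (hj : j < l.length)
    (h : l[i] = l[j]) : seqEdge l.prefixParity i = seqEdge l.prefixParity j := by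
  by_cases hm : ∃ m, ∃ hmj : m < j, i < m ∧ l[m] = l[i]
  · obtain ⟨m, hmj, him, hlm⟩ := hm
    exact (hl.seqEdge_eq_of_lt him (hmj.trans hj) hlm.symm).trans
      (hl.seqEdge_eq_of_lt hmj hj (hlm.trans h))
  · simp only [not_exists, not_and] at hm
    have hj' := hl.prefixParity_eq_of_consecutive hij hj h hm
    rw [seqEdge_eq_seqEdge_iff, hj', prefixParity_succ_eq_of_eq_succ (hij.trans hj) hj h hj',
      Sym2.eq_swap]
termination_by j - i

theorem seqEdge_prefixParity_eq_iff (hl : IsCAPP l) {i j : ℕ} (hi : i < l.length)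
    (hj : j < l.length) : seqEdge l.prefixParity i = seqEdge l.prefixParity j ↔ l[i] = l[j] := by
  refine ⟨getElem_eq_of_seqEdge_eq hi hj, fun h => ?_⟩
  rcases lt_trichotomy i j with hij | rfl | hji
  · exact hl.seqEdge_eq_of_lt hij hj h
  · rfl
  · exact (hl.seqEdge_eq_of_lt hji hi h.symm).symm

theorem isAcyclic_seqGraph (hl : IsCAPP l) : (seqGraph l.prefixParity).IsAcyclic := by
  refine isAcyclic_of_forall_exists_unique_jump (β := ZMod 2) fun e he => ?_
  obtain ⟨i, hi, rfl⟩ := mem_edgeSet_seqGraph.mp he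
  have hil := lt_length_of_prefixParity_ne_succ hi
  refine ⟨fun w => (w : α → ZMod 2) l[i], fun e' he' => ?_⟩
  obtain ⟨j, hj, rfl⟩ := mem_edgeSet_seqGraph.mp he'
  have hjl := lt_length_of_prefixParity_ne_succ hj
  rw [hl.seqEdge_prefixParity_eq_iff hjl hil, seqEdge, Sym2.map_mk, Sym2.mk_isDiag_iff, eq_comm]
  exact (prefixParity_succ_apply_eq_iff hjl _).not.trans (by rw [not_not, eq_comm])

theorem isTree_seqGraph (hl : IsCAPP l) : (seqGraph l.prefixParity).IsTree :=
  ⟨seqGraph_connected, hl.isAcyclic_seqGraph⟩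

theorem exists_walk_edges_eq_map_letterEdge (hl : IsCAPP l) :
    ∃ c : (seqGraph l.prefixParity).Walk (Set.rangeFactorization _ 0)
      (Set.rangeFactorization _ 0), c.edges = l.map l.letterEdge := by
  obtain ⟨c, hc⟩ := exists_walk_seqGraph_edges_eq (x := l.prefixParity) l.length
    fun _ hi => prefixParity_ne_succ hi
  have hclosed : Set.rangeFactorization l.prefixParity l.length = Set.rangeFactorization _ 0 :=
    Subtype.ext (hl.prefixParity_length.trans prefixParity_zero.symm)
  refine ⟨c.copy rfl hclosed, ?_⟩
  rw [Walk.edges_copy, hc]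
  refine List.ext_getElem (by simp) fun i hi _ => ?_
  have hi' : i < l.length := by simpa using hi
  have hidx := idxOf_lt_length_iff.mpr (getElem_mem hi')
  simp only [getElem_map, getElem_range]
  exact ((hl.seqEdge_prefixParity_eq_iff hidx hi').mpr (getElem_idxOf hidx)).symm

end IsCAPP

/-- Every CAPP is realizable as the edge sequence of a closed walk in a finite
tree: there are a finite tree `T`, a vertex `v`, a closed walk `c` at `v`, and
an injective relabeling `φ` of the symbols of `π` by edges of `T` such that the
edge list of `c` is the image of `π` under `φ`. -/
theorem stmt8 {α : Type*} [DecidableEq α] (π : List α) (hπ : IsCAPP π) :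
    ∃ (n : ℕ) (T : SimpleGraph (Fin n)) (_ : T.IsTree) (v : Fin n)
      (c : T.Walk v v) (φ : α → Sym2 (Fin n)),
        Set.InjOn φ {a | a ∈ π} ∧ (∀ a ∈ π, φ a ∈ T.edgeSet) ∧
        c.edges = π.map φ := by
  have := π.finite_range_prefixParity.to_subtype
  let f := SimpleGraph.Iso.map (Finite.equivFin _) (SimpleGraph.seqGraph π.prefixParity)
  obtain ⟨c, hc⟩ := hπ.exists_walk_edges_eq_map_letterEdge
  refine ⟨_, _, f.isTree_iff.mp hπ.isTree_seqGraph, _, c.map f.toHom, Sym2.map f ∘ π.letterEdge,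
    (Sym2.map.injective f.injective).comp_injOn List.injOn_letterEdge,
    fun a ha => f.map_mem_edgeSet_iff.mpr (List.letterEdge_mem_edgeSet ha), ?_⟩
  rw [SimpleGraph.Walk.edges_map, hc, List.map_map]
  rfl
end
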